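/- arXiv:1607.03193 — 2 statements merged into one kernel-verified Lean document; each statement's English description precedes it below -/
import Mathlib

section
/- Let \(C \in \mathbb{R}^{p \times n}\), \(A \in \mathbb{R}^{n\times n}\), and suppose every generalized eigenvector of \(A\) whose eigenvalue has magnitude \(\ge 1\) lies in the kernel of \(C\). Write \(x_t = \sum_i [\alpha_t]_i v_i\) in a generalized eigenvector basis. Then for all \(T \ge n\) and all \(t\), \(C A^T x_t = \sum_{i : |\lambda_i| < 1} [\alpha_t]_i \sum_{j : \lambda_j = \lambda_i} \lambda_i^T p_{(j,i)}(T) C v_j\), and hence \(\|C A^T x_t\| \le b_1 \kappa n \eta \cdot T^n \rho^T\) where \(\rho = \max\{|\lambda_i| : |\lambda_i| < 1\} < 1\), \(\eta = \max_j \|C v_j\|\), \(b_1\) bounds the stable coordinates and \(\kappa\) bounds the Jordan-block polynomial growth. Consequently \(\|C A^T x_t\|\) can be made uniformly (in \(t\)) smaller than any prescribed positive threshold by choosing \(T\) large. -/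
/-!
Expand the state in a basis of generalized eigenvectors. Since `A - λ` is nilpotent on the
generalized eigenspace of `λ`, the binomial theorem gives, for `T ≥ n`,
`A^T v_i = ∑_{k<n} (T choose k) λ_i^(T-k) (A - λ_i)^k v_i`, a combination of the `v_j` with
`λ_j = λ_i` whose coefficients are `λ_i^T` times a polynomial in `T`; these are `O(T^n ρ^T)` when
`|λ_i| < 1`. The hypothesis on `C` removes every other eigenvalue from `C A^T x_t`. The stable
coordinates of `x_t` stay bounded because the projection onto the stable basis vectors commutes
with `A`, and `∑_k ‖A^k v_i‖ < ∞` for stable `i` controls the variation-of-constants formula for the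
projected trajectory, whose inputs `B u_t` range over a finite set.
-/

open Finset Module Module.End Filter Topology

theorem Module.End.pow_apply_eq_sum_of_pow_sub_smul_apply_eq_zero {R M : Type*} [CommRing R]
    [AddCommGroup M] [Module R M] (f : End R M) (μ : R) {x : M} {N T : ℕ}
    (hx : ((f - μ • 1) ^ N) x = 0) (hNT : N ≤ T) :
    (f ^ T) x = ∑ k ∈ range N, (T.choose k * μ ^ (T - k)) • ((f - μ • 1) ^ k) x := by
  have hcomm : Commute (f - μ • 1) (μ • 1) := (Commute.one_right _).smul_right μ
  have hvanish : ∀ k ∈ Ico N (T + 1),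
      (T.choose k * μ ^ (T - k)) • ((f - μ • 1) ^ k) x = 0 := fun k hk => by
    rw [← Nat.sub_add_cancel (mem_Ico.mp hk).1, pow_add, mul_apply, hx, map_zero, smul_zero]
  rw [← add_zero (∑ k ∈ range N, _), ← sum_eq_zero hvanish,
    sum_range_add_sum_Ico _ (by omega : N ≤ T + 1)]
  nth_rw 1 [← sub_add_cancel f (μ • 1)]
  rw [hcomm.add_pow, LinearMap.sum_apply]
  refine sum_congr rfl fun k _ => ?_
  rw [_root_.smul_pow, one_pow, mul_smul_comm, mul_one, mul_apply, Module.End.natCast_apply,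
    LinearMap.smul_apply, map_nsmul, mul_smul, ← Nat.cast_smul_eq_nsmul R, smul_comm]

theorem Module.End.pow_finrank_sub_smul_apply_eq_zero {K V : Type*} [Field K] [AddCommGroup V]
    [Module K V] [FiniteDimensional K V] (f : End K V) {μ : K} {x : V} {l : ℕ}
    (hx : ((f - μ • 1) ^ l) x = 0) : ((f - μ • 1) ^ finrank K V) x = 0 :=
  mem_genEigenspace_nat.mp <|
    f.genEigenspace_le_genEigenspace_finrank μ l (mem_genEigenspace_nat.mpr hx)

theorem Module.End.eq_pow_apply_add_sum_of_eq_add {R M : Type*} [Semiring R] [AddCommMonoid M]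
    [Module R M] (f : End R M) {x w : ℕ → M} (hx : ∀ t, x (t + 1) = f (x t) + w t) (t : ℕ) :
    x t = (f ^ t) (x 0) + ∑ s ∈ range t, (f ^ (t - 1 - s)) (w s) := by
  induction t with
  | zero => simp
  | succ t ih =>
    rw [hx, ih, map_add, map_sum, sum_range_succ, Nat.add_sub_cancel, Nat.sub_self, pow_zero,
      one_apply, ← add_assoc, ← mul_apply, ← pow_succ']
    congr 2
    refine sum_congr rfl fun s hs => ?_
    rw [← mul_apply, ← pow_succ']
    congr 2
    have := mem_range.mp hs
    omega

theorem Module.End.norm_le_of_eq_add {R E : Type*} [Semiring R] [SeminormedAddCommGroup E]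
    [Module R E] (f : End R E) {x w : ℕ → E} (hx : ∀ t, x (t + 1) = f (x t) + w t)
    {g : ℕ → ℝ} {b c : ℝ} (h0 : ∀ k, ‖(f ^ k) (x 0)‖ ≤ b * g k)
    (hw : ∀ k s, ‖(f ^ k) (w s)‖ ≤ c * g k) (t : ℕ) :
    ‖x t‖ ≤ b * g t + c * ∑ k ∈ range t, g k := by
  rw [f.eq_pow_apply_add_sum_of_eq_add hx t, ← sum_range_reflect g, mul_sum]
  exact (norm_add_le _ _).trans (add_le_add (h0 t)
    ((norm_sum_le _ _).trans (sum_le_sum fun s _ => hw _ s)))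

namespace Module.Basis

variable {K V ι : Type*} [Field K] [AddCommGroup V] [Module K V]

noncomputable def coordProj (v : Basis ι K V) (s : Finset ι) : End K V :=
  ∑ i ∈ s, (v.coord i).smulRight (v i)

/-- The factor `(lam i)⁻¹ ^ k` only ever meets `lam i ^ T` with `k < T`, where the product is
`lam i ^ (T - k)` even when `lam i = 0` (`pow_sub_of_lt`). -/
noncomputable def jordanPoly (v : Basis ι K V) (f : End K V) (lam : ι → K) (N : ℕ) (j i : ι) :
    Polynomial K :=
  ∑ k ∈ range N,
    Polynomial.C (v.repr (((f - lam i • 1) ^ k) (v i)) j * (lam i)⁻¹ ^ k / k.factorial) *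
      descPochhammer K k

variable {f : End K V} {v : Basis ι K V} {lam : ι → K}

theorem coordProj_apply (s : Finset ι) (z : V) :
    v.coordProj s z = ∑ i ∈ s, v.repr z i • v i := by
  simp [coordProj]

theorem repr_coordProj_of_mem {s : Finset ι} {i : ι} (hi : i ∈ s) (z : V) :
    v.repr (v.coordProj s z) i = v.repr z i := by
  classical
  simp [coordProj_apply, Finsupp.single_apply, hi]

section

open Polynomial Nat

theorem eval_jordanPoly [CharZero K] (N : ℕ) (j i : ι) (T : ℕ) :
    (v.jordanPoly f lam N j i).eval (T : K) =
      ∑ k ∈ range N, v.repr (((f - lam i • 1) ^ k) (v i)) j * (lam i)⁻¹ ^ k * T.choose k := by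
  simp only [jordanPoly, eval_finsetSum, eval_mul, eval_C, descPochhammer_eval_eq_descFactorial,
    descFactorial_eq_factorial_mul_choose, cast_mul]
  refine sum_congr rfl fun k _ => ?_
  have : (k ! : K) ≠ 0 := cast_ne_zero.mpr k.factorial_ne_zero
  field_simp

theorem repr_pow_apply_eq_jordanPoly [CharZero K] {N T : ℕ}
    (hv : ∀ i, ((f - lam i • 1) ^ N) (v i) = 0) (hNT : N ≤ T) (i j : ι) :
    v.repr ((f ^ T) (v i)) j = lam i ^ T * (v.jordanPoly f lam N j i).eval (T : K) := by
  rw [f.pow_apply_eq_sum_of_pow_sub_smul_apply_eq_zero _ (hv i) hNT, eval_jordanPoly, mul_sum,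
    map_sum, Finsupp.finsetSum_apply]
  refine sum_congr rfl fun k hk => ?_
  rw [map_smul, Finsupp.smul_apply, smul_eq_mul,
    pow_sub_of_lt _ ((mem_range.mp hk).trans_le hNT), inv_pow]
  ring

end

variable [Fintype ι]

theorem repr_eq_zero_of_mem_maxGenEigenspace (hv : ∀ i, v i ∈ f.maxGenEigenspace (lam i))
    {μ : K} {y : V} (hy : y ∈ f.maxGenEigenspace μ) {j : ι} (hj : lam j ≠ μ) :
    v.repr y j = 0 := by
  classical
  set z := ∑ i ∈ univ.filter (lam · ≠ μ), v.repr y i • v i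
  have hz_other : z ∈ ⨆ ν ∈ ({μ}ᶜ : Set K), f.maxGenEigenspace ν :=
    Submodule.sum_mem _ fun i hi => Submodule.smul_mem _ _ <|
      (le_biSup (f.maxGenEigenspace ·) (mem_filter.mp hi).2) (hv i)
  have hz_self : z ∈ f.maxGenEigenspace μ := by
    have : z = y - ∑ i ∈ univ.filter (lam · = μ), v.repr y i • v i := by
      rw [eq_sub_iff_add_eq, add_comm, sum_filter_add_sum_filter_not, v.sum_repr]
    rw [this]
    refine Submodule.sub_mem _ hy (Submodule.sum_mem _ fun i hi => Submodule.smul_mem _ _ ?_)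
    exact (mem_filter.mp hi).2 ▸ hv i
  have hz : z = 0 := ((f.independent_genEigenspace ⊤).disjoint_biSup
    (y := {μ}ᶜ) (by simp)).le_bot ⟨hz_self, hz_other⟩
  exact linearIndependent_iff'.mp v.linearIndependent _ _ hz j (by simpa using hj)

theorem sum_filter_repr_smul_of_mem_maxGenEigenspace [DecidableEq K]
    (hv : ∀ i, v i ∈ f.maxGenEigenspace (lam i)) {μ : K} {y : V}
    (hy : y ∈ f.maxGenEigenspace μ) :
    ∑ j ∈ univ.filter (lam · = μ), v.repr y j • v j = y := by
  rw [sum_filter_of_ne fun j _ hj => ?_, v.sum_repr]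
  contrapose! hj
  rw [repr_eq_zero_of_mem_maxGenEigenspace hv hy hj, zero_smul]

theorem map_pow_apply_eq_sum_filter [DecidableEq K] {W : Type*} [AddCommGroup W] [Module K W]
    (hv : ∀ i, v i ∈ f.maxGenEigenspace (lam i)) (g : V →ₗ[K] W) (S : K → Prop)
    [DecidablePred S] (hg : ∀ j, ¬ S (lam j) → g (v j) = 0) (T : ℕ) (z : V) :
    g ((f ^ T) z) = ∑ i ∈ univ.filter (fun i => S (lam i)),
      v.repr z i • ∑ j ∈ univ.filter (lam · = lam i), v.repr ((f ^ T) (v i)) j • g (v j) := by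
  have hterm : ∀ i, g ((f ^ T) (v i)) =
      ∑ j ∈ univ.filter (lam · = lam i), v.repr ((f ^ T) (v i)) j • g (v j) := fun i => by
    have hmem := f.mapsTo_maxGenEigenspace_of_comm ((Commute.refl f).pow_right T) _ (hv i)
    conv_lhs => rw [← sum_filter_repr_smul_of_mem_maxGenEigenspace hv hmem]
    simp only [map_sum, map_smul]
  conv_lhs => rw [← v.sum_repr z]
  simp only [map_sum, map_smul, ← hterm]
  refine (sum_filter_of_ne fun i _ hi => ?_).symm
  contrapose! hi
  rw [hterm, sum_eq_zero fun j hj => by rw [hg j ((mem_filter.mp hj).2 ▸ hi), smul_zero],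
    smul_zero]

theorem coordProj_filter_apply_of_mem_maxGenEigenspace
    (hv : ∀ i, v i ∈ f.maxGenEigenspace (lam i)) (S : K → Prop) [DecidablePred S] {μ : K}
    {y : V} (hy : y ∈ f.maxGenEigenspace μ) :
    v.coordProj (univ.filter fun i => S (lam i)) y = if S μ then y else 0 := by
  rw [coordProj_apply]
  split_ifs with hμ
  · refine (sum_filter_of_ne fun i _ hi => ?_).trans (v.sum_repr y)
    by_contra hS
    exact hi (by rw [repr_eq_zero_of_mem_maxGenEigenspace hv hy (by rintro rfl; exact hS hμ),
      zero_smul])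
  · refine sum_eq_zero fun i hi => ?_
    rw [repr_eq_zero_of_mem_maxGenEigenspace hv hy
      (by rintro rfl; exact hμ (mem_filter.mp hi).2), zero_smul]

theorem commute_coordProj_filter (hv : ∀ i, v i ∈ f.maxGenEigenspace (lam i)) (S : K → Prop)
    [DecidablePred S] : Commute f (v.coordProj (univ.filter fun i => S (lam i))) := by
  refine v.ext fun i => ?_
  have hfv := f.mapsTo_maxGenEigenspace_of_comm (Commute.refl f) _ (hv i)
  simp only [mul_apply, coordProj_filter_apply_of_mem_maxGenEigenspace hv S (hv i),
    coordProj_filter_apply_of_mem_maxGenEigenspace hv S hfv]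
  split_ifs <;> simp

end Module.Basis

theorem norm_pow_mul_sum_choose_le {lam : ℂ} {ρ : ℝ} (hlam : ‖lam‖ ≤ ρ) (c : ℕ → ℂ) {N T : ℕ}
    (hNT : N ≤ T) :
    ‖lam ^ T * ∑ k ∈ range N, c k * lam⁻¹ ^ k * T.choose k‖ ≤
      (∑ k ∈ range N, ‖c k‖ * ‖lam‖⁻¹ ^ k) * T ^ N * ρ ^ T := by
  rw [mul_sum, sum_mul, sum_mul]
  refine (norm_sum_le _ _).trans (sum_le_sum fun k hk => ?_)
  have hkT : k < T := (mem_range.mp hk).trans_le hNT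
  have hchoose : (T.choose k : ℝ) ≤ (T : ℝ) ^ N := calc
    (T.choose k : ℝ) ≤ (T : ℝ) ^ k := by exact_mod_cast T.choose_le_pow k
    _ ≤ (T : ℝ) ^ N := pow_le_pow_right₀ (by exact_mod_cast hkT.pos) (mem_range.mp hk).le
  have hpow : ‖lam‖ ^ T ≤ ρ ^ T := pow_le_pow_left₀ (norm_nonneg _) hlam T
  simp only [norm_mul, norm_pow, norm_inv, Complex.norm_natCast]
  calc ‖lam‖ ^ T * (‖c k‖ * ‖lam‖⁻¹ ^ k * T.choose k)
      ≤ ρ ^ T * (‖c k‖ * ‖lam‖⁻¹ ^ k * (T : ℝ) ^ N) := by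
        gcongr
        exact pow_nonneg ((norm_nonneg _).trans hlam) T
    _ = ‖c k‖ * ‖lam‖⁻¹ ^ k * T ^ N * ρ ^ T := by ring

theorem Module.Basis.exists_norm_pow_mul_eval_jordanPoly_le {V ι : Type*} [AddCommGroup V]
    [Module ℂ V] [Finite ι] (v : Basis ι ℂ V) (f : End ℂ V) (lam : ι → ℂ) (N : ℕ) :
    ∃ κ : ℝ, 0 < κ ∧ ∀ i j {ρ : ℝ} {T : ℕ}, ‖lam i‖ ≤ ρ → N ≤ T →
      ‖lam i ^ T * (v.jordanPoly f lam N j i).eval (T : ℂ)‖ ≤ κ * T ^ N * ρ ^ T := by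
  obtain ⟨M, hM⟩ := Finite.exists_le fun ij : ι × ι =>
    ∑ k ∈ range N, ‖v.repr (((f - lam ij.1 • 1) ^ k) (v ij.1)) ij.2‖ * ‖lam ij.1‖⁻¹ ^ k
  refine ⟨max M 1, by positivity, fun i j ρ T hlam hNT => ?_⟩
  rw [eval_jordanPoly]
  refine (norm_pow_mul_sum_choose_le hlam _ hNT).trans ?_
  have := pow_nonneg ((norm_nonneg _).trans hlam) T
  gcongr
  exact (hM (i, j)).trans (le_max_left _ _)

theorem Module.Basis.norm_repr_le {𝕜 E ι : Type*} [NontriviallyNormedField 𝕜]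
    [CompleteSpace 𝕜] [NormedAddCommGroup E] [NormedSpace 𝕜 E] [Fintype ι] (v : Basis ι 𝕜 E)
    (z : E) (i : ι) : ‖v.repr z i‖ ≤ ‖(v.equivFunL : E →L[𝕜] ι → 𝕜)‖ * ‖z‖ :=
  (norm_le_pi_norm (v.equivFunL z) i).trans ((v.equivFunL : E →L[𝕜] ι → 𝕜).le_opNorm z)

theorem Module.Basis.summable_norm_of_norm_repr_le {𝕜 E ι : Type*} [NormedField 𝕜]
    [SeminormedAddCommGroup E] [NormedSpace 𝕜 E] [Fintype ι] (v : Basis ι 𝕜 E) {y : ℕ → E}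
    {g : ℕ → ℝ} (hg : Summable g) (hy : ∀ᶠ k in atTop, ∀ j, ‖v.repr (y k) j‖ ≤ g k) :
    Summable fun k => ‖y k‖ := by
  refine (hg.mul_right (∑ j, ‖v j‖)).of_norm_bounded_eventually_nat (hy.mono fun k hk => ?_)
  rw [norm_norm, ← v.sum_repr (y k), mul_sum]
  exact (norm_sum_le _ _).trans (sum_le_sum fun j _ => (norm_smul_le _ _).trans
    (mul_le_mul_of_nonneg_right (hk j) (norm_nonneg _)))

theorem Module.Basis.summable_norm_pow_apply {V ι : Type*} [NormedAddCommGroup V]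
    [NormedSpace ℂ V] [Fintype ι] (v : Basis ι ℂ V) (f : End ℂ V) {lam : ι → ℂ} {N : ℕ}
    (hv : ∀ i, ((f - lam i • 1) ^ N) (v i) = 0) {i : ι} (hi : ‖lam i‖ < 1) :
    Summable fun k => ‖(f ^ k) (v i)‖ := by
  obtain ⟨κ, -, hκ⟩ := v.exists_norm_pow_mul_eval_jordanPoly_le f lam N
  have hgeom := summable_pow_mul_geometric_of_norm_lt_one N (r := ‖lam i‖) (by rwa [norm_norm])
  refine v.summable_norm_of_norm_repr_le (hgeom.mul_left κ) ?_
  filter_upwards [eventually_ge_atTop N] with k hk j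
  rw [repr_pow_apply_eq_jordanPoly hv hk]
  exact (hκ i j le_rfl hk).trans_eq (by ring)

theorem Module.Basis.exists_forall_sum_norm_repr_le {𝕜 V ι : Type*} [NontriviallyNormedField 𝕜]
    [CompleteSpace 𝕜] [NormedAddCommGroup V] [NormedSpace 𝕜 V] [Fintype ι] (v : Basis ι 𝕜 V)
    (f : End 𝕜 V) {s : Finset ι} (hcomm : Commute f (v.coordProj s))
    (hsum : ∀ i ∈ s, Summable fun k => ‖(f ^ k) (v i)‖) {x w : ℕ → V}
    (hx : ∀ t, x (t + 1) = f (x t) + w t) {b c : ℝ} (hx0 : ‖x 0‖ ≤ b) (hw : ∀ t, ‖w t‖ ≤ c) :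
    ∃ b₁ : ℝ, 0 < b₁ ∧ ∀ t, ∑ i ∈ s, ‖v.repr (x t) i‖ ≤ b₁ := by
  set c₀ := ‖(v.equivFunL : V →L[𝕜] ι → 𝕜)‖
  set P := v.coordProj s
  set G : ℕ → ℝ := fun k => ∑ i ∈ s, ‖(f ^ k) (v i)‖
  have hG0 : ∀ k, 0 ≤ G k := fun k => sum_nonneg fun _ _ => norm_nonneg _
  have hG : Summable G := summable_sum hsum
  have hb : 0 ≤ b := (norm_nonneg _).trans hx0
  have hc : 0 ≤ c := (norm_nonneg _).trans (hw 0)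
  have hfP : ∀ k z, ‖(f ^ k) (P z)‖ ≤ c₀ * ‖z‖ * G k := fun k z => by
    rw [coordProj_apply, map_sum, mul_sum]
    refine (norm_sum_le _ _).trans (sum_le_sum fun i _ => ?_)
    rw [map_smul]
    exact (norm_smul_le _ _).trans (mul_le_mul_of_nonneg_right (v.norm_repr_le z i) (norm_nonneg _))
  have hPrec : ∀ t, P (x (t + 1)) = f (P (x t)) + P (w t) := fun t => by
    rw [hx, map_add, ← mul_apply, ← hcomm.eq, mul_apply]
  set M := (c₀ * b + c₀ * c) * ∑' k, G k
  have hPx : ∀ t, ‖P (x t)‖ ≤ M := fun t => calc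
    ‖P (x t)‖ ≤ c₀ * b * G t + c₀ * c * ∑ k ∈ range t, G k :=
      f.norm_le_of_eq_add (x := fun t => P (x t)) hPrec (b := c₀ * b) (c := c₀ * c)
        (fun k => (hfP k _).trans (by gcongr))
        (fun k s => (hfP k _).trans (by gcongr; exact hw s)) t
    _ ≤ c₀ * b * ∑' k, G k + c₀ * c * ∑' k, G k := by
      gcongr
      · exact hG.le_tsum t fun k _ => hG0 k
      · exact hG.sum_le_tsum _ fun k _ => hG0 k
    _ = M := by ring
  refine ⟨s.card * (c₀ * M) + 1, by positivity, fun t => ?_⟩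
  calc ∑ i ∈ s, ‖v.repr (x t) i‖ = ∑ i ∈ s, ‖v.repr (P (x t)) i‖ :=
        sum_congr rfl fun i hi => by rw [repr_coordProj_of_mem hi]
    _ ≤ ∑ _i ∈ s, c₀ * M := sum_le_sum fun i _ =>
        (v.norm_repr_le _ i).trans (mul_le_mul_of_nonneg_left (hPx t) (norm_nonneg _))
    _ ≤ s.card * (c₀ * M) + 1 := by rw [sum_const, nsmul_eq_mul]; linarith

theorem norm_sum_smul_sum_smul_le {𝕜 E ι κ : Type*} [NormedField 𝕜] [SeminormedAddCommGroup E]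
    [NormedSpace 𝕜 E] {s : Finset ι} {t : ι → Finset κ} {α : ι → 𝕜} {a : ι → κ → 𝕜}
    {y : κ → E} {B K η : ℝ} {m : ℕ} (hα : ∑ i ∈ s, ‖α i‖ ≤ B)
    (ha : ∀ i ∈ s, ∀ j ∈ t i, ‖a i j‖ ≤ K) (hy : ∀ j, ‖y j‖ ≤ η) (ht : ∀ i ∈ s, #(t i) ≤ m)
    (hK : 0 ≤ K) (hη : 0 ≤ η) :
    ‖∑ i ∈ s, α i • ∑ j ∈ t i, a i j • y j‖ ≤ B * K * m * η := by
  have hinner : ∀ i ∈ s, ‖∑ j ∈ t i, a i j • y j‖ ≤ m * (K * η) := fun i hi => calc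
    ‖∑ j ∈ t i, a i j • y j‖ ≤ ∑ _j ∈ t i, K * η := (norm_sum_le _ _).trans <| sum_le_sum
        fun j hj => (norm_smul_le _ _).trans (mul_le_mul (ha i hi j hj) (hy j) (norm_nonneg _) hK)
    _ ≤ m * (K * η) := by
      rw [sum_const, nsmul_eq_mul]
      gcongr
      exact_mod_cast ht i hi
  calc ‖∑ i ∈ s, α i • ∑ j ∈ t i, a i j • y j‖ ≤ ∑ i ∈ s, ‖α i‖ * (m * (K * η)) :=
        (norm_sum_le _ _).trans <| sum_le_sum fun i hi =>
          (norm_smul_le _ _).trans (mul_le_mul_of_nonneg_left (hinner i hi) (norm_nonneg _))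
    _ ≤ B * (m * (K * η)) := by rw [← sum_mul]; gcongr
    _ = B * K * m * η := by ring

theorem exists_forall_lt_of_le_mul_pow_mul_pow {ι : Type*} {F : ℕ → ι → ℝ} {K ρ : ℝ} {N : ℕ}
    (hρ0 : 0 ≤ ρ) (hρ1 : ρ < 1) (hF : ∀ T, N ≤ T → ∀ t, F T t ≤ K * T ^ N * ρ ^ T) {ε : ℝ}
    (hε : 0 < ε) : ∃ T, ∀ t, F T t < ε := by
  have hlim : Tendsto (fun T : ℕ => K * T ^ N * ρ ^ T) atTop (𝓝 0) := by
    simpa [mul_assoc] using (tendsto_pow_const_mul_const_pow_of_abs_lt_one N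
      (abs_lt.mpr ⟨by linarith, hρ1⟩)).const_mul K
  obtain ⟨T, hTε, hNT⟩ := ((hlim.eventually (gt_mem_nhds hε)).and (eventually_ge_atTop N)).exists
  exact ⟨T, fun t => (hF T hNT t).trans_lt hTε⟩

/-- If every generalized eigenvector of `A` with eigenvalue magnitude `≥ 1` lies in `ker C`,
then for `T ≥ n`, `C A^T x_t` is a combination of the stable coordinates only, it satisfies
`‖C A^T x_t‖ ≤ b₁ κ n η T^n ρ^T` with `ρ < 1`, and hence `‖C A^T x_t‖` can be made uniformly
(in `t`) smaller than any prescribed positive threshold by choosing `T` large. -/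
theorem stmt_11 {n m p : ℕ} (A : Module.End ℂ (Fin n → ℂ))
    (B : (Fin m → ℂ) →ₗ[ℂ] (Fin n → ℂ)) (C : (Fin n → ℂ) →ₗ[ℂ] (Fin p → ℂ))
    (v : Module.Basis (Fin n) ℂ (Fin n → ℂ)) (lam : Fin n → ℂ)
    (hgen : ∀ i, ∃ l : ℕ, 1 ≤ l ∧ ((A - lam i • 1) ^ l) (v i) = 0 ∧
        ((A - lam i • 1) ^ (l - 1)) (v i) ≠ 0)
    (hker : ∀ i, 1 ≤ ‖lam i‖ → C (v i) = 0)
    (U : Finset (Fin m → ℂ))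
    (x : ℕ → Fin n → ℂ) (u : ℕ → Fin m → ℂ) (b : ℝ) (hx0 : ‖x 0‖ ≤ b)
    (hu : ∀ t, u t ∈ U) (hx : ∀ t, x (t + 1) = A (x t) + B (u t))
    (ρ : ℝ) (hρ0 : 0 ≤ ρ) (hρ1 : ρ < 1) (hρ : ∀ i, ‖lam i‖ < 1 → ‖lam i‖ ≤ ρ)
    (η : ℝ) (hη : ∀ j, ‖C (v j)‖ ≤ η) :
    ∃ (pp : Fin n → Fin n → Polynomial ℂ) (κ b1 : ℝ), 0 < κ ∧ 0 < b1 ∧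
      (∀ T : ℕ, n ≤ T → ∀ t : ℕ,
        C ((A ^ T) (x t)) = ∑ i ∈ Finset.univ.filter (fun i => ‖lam i‖ < 1),
          v.repr (x t) i • ∑ j ∈ Finset.univ.filter (fun j => lam j = lam i),
            (lam i ^ T * (pp j i).eval (T : ℂ)) • C (v j)) ∧
      (∀ T : ℕ, n ≤ T → ∀ t : ℕ,
        ‖C ((A ^ T) (x t))‖ ≤ b1 * κ * n * η * (T : ℝ) ^ n * ρ ^ T) ∧
      (∀ ε : ℝ, 0 < ε → ∃ T : ℕ, ∀ t : ℕ, ‖C ((A ^ T) (x t))‖ < ε) := by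
  have hnil : ∀ i, ((A - lam i • 1) ^ n) (v i) = 0 := fun i => by
    obtain ⟨l, -, hl, -⟩ := hgen i
    simpa using A.pow_finrank_sub_smul_apply_eq_zero hl
  have hv : ∀ i, v i ∈ A.maxGenEigenspace (lam i) := fun i =>
    (A.mem_maxGenEigenspace _ _).mpr ⟨n, hnil i⟩
  obtain ⟨κ, hκ, hcoef⟩ := v.exists_norm_pow_mul_eval_jordanPoly_le A lam n
  obtain ⟨b1, hb1, hstable⟩ := v.exists_forall_sum_norm_repr_le A
    (v.commute_coordProj_filter hv (‖·‖ < 1)) (fun i hi => v.summable_norm_pow_apply A hnil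
      (mem_filter.mp hi).2) (w := fun t => B (u t)) hx hx0
    (fun t => single_le_sum (f := fun w => ‖B w‖) (fun _ _ => norm_nonneg _) (hu t))
  have hformula : ∀ T : ℕ, n ≤ T → ∀ t : ℕ,
      C ((A ^ T) (x t)) = ∑ i ∈ univ.filter (fun i => ‖lam i‖ < 1),
        v.repr (x t) i • ∑ j ∈ univ.filter (fun j => lam j = lam i),
          (lam i ^ T * (v.jordanPoly A lam n j i).eval (T : ℂ)) • C (v j) := fun T hT t => by
    rw [v.map_pow_apply_eq_sum_filter hv C (‖·‖ < 1) (fun j hj => hker j (not_lt.mp hj))]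
    simp only [Basis.repr_pow_apply_eq_jordanPoly hnil hT]
  have hbound : ∀ T : ℕ, n ≤ T → ∀ t : ℕ,
      ‖C ((A ^ T) (x t))‖ ≤ b1 * κ * n * η * (T : ℝ) ^ n * ρ ^ T := fun T hT t => by
    rcases n.eq_zero_or_pos with rfl | hn
    · rw [Subsingleton.elim ((A ^ T) (x t)) 0, map_zero, norm_zero]
      simp
    rw [hformula T hT t]
    refine (norm_sum_smul_sum_smul_le (K := κ * T ^ n * ρ ^ T) (hstable t) (fun i hi j _ => ?_) hη
      (fun i _ => (card_filter_le _ _).trans_eq (card_fin n))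
      (mul_nonneg (mul_nonneg hκ.le (by positivity)) (pow_nonneg hρ0 T))
      ((norm_nonneg _).trans (hη ⟨0, hn⟩))).trans_eq (by ring)
    exact hcoef i j (hρ i (mem_filter.mp hi).2) hT
  exact ⟨_, κ, b1, hκ, hb1, hformula, hbound,
    fun ε hε => exists_forall_lt_of_le_mul_pow_mul_pow hρ0 hρ1 hbound hε⟩
end

section
/- Let \(P \subset \mathcal{U}^{\mathbb{N}} \times \mathcal{Y}^{\mathbb{N}}\) with \(|\mathcal{U}| < \infty\), \(1 < |\mathcal{Y}| < \infty\). Suppose there exists an unobservable family \(\Psi = \{\{(\{u^{(k,j)}_t\}_{t=0}^{T_{(k,j)}}, \{y^{(k,j)}_t\}_{t=0}^{T_{(k,j)}})\}_{j=1}^{2^k}\}_{k=1}^{\infty}\) of input-output segments satisfying: (i) for each \(k,j\), the sibling pair \((k,2j-1)\) and \((k,2j)\) has equal horizons, identical inputs throughout and identical outputs up to time \(T_{(k,2j-1)}-1\), but differing outputs at time \(T_{(k,2j-1)}\); (ii) each child segment extends its parent segment \((k-1,j)\) with strictly larger horizon; (iii) every infinite branch through the binary tree concatenates to a valid behavior \((\mathbf{u},\mathbf{y})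 \in P\). Then \(P\) is not weakly output observable. -/
/-- A candidate observer. -/
structure Observer (E F Q : Type*) where
  f : Q → E → F → Q
  g : Q → E → F
  q0 : Q

def Observer.state {E F Q : Type*} (S : Observer E F Q) (u : ℕ → E) (y : ℕ → F) : ℕ → Q
  | 0 => S.q0
  | t + 1 => S.f (Observer.state S u y t) (u t) (y t)

def Observer.est {E F Q : Type*} (S : Observer E F Q) (u : ℕ → E) (y : ℕ → F) (t : ℕ) : F :=
  S.g (Observer.state S u y t) (u t)

/-- `γ` is an observation gain bound of `(P, Ŝ)`. -/
def IsGainBound {E F : Type*} [NormedAddCommGroup E] [NormedAddCommGroup F]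
    (P : Set ((ℕ → E) × (ℕ → F))) {Q : Type*} (S : Observer E F Q) (γ : ℝ) : Prop :=
  ∀ uy ∈ P, ∃ M : ℝ, ∀ T : ℕ,
    ∑ t ∈ Finset.range (T + 1), (‖uy.2 t - Observer.est S uy.1 uy.2 t‖ - γ * ‖uy.1 t‖) ≤ M

/-- `P` is weakly output observable (observers take outputs in the alphabet `Ys`). -/
def WeaklyOutputObservable {E F : Type*} [NormedAddCommGroup E] [NormedAddCommGroup F]
    (P : Set ((ℕ → E) × (ℕ → F))) (Ys : Set F) : Prop :=
  ∃ (Q : Type) (S : Observer E F Q), (∀ q u, S.g q u ∈ Ys) ∧ IsGainBound P S 0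

/-! By causality an observer's estimate at time `T` depends only on inputs up to `T` and outputs
before `T`, so at each branching time it gives the same estimate on two siblings whose outputs
differ, and is wrong on at least one of them. Always descending into a child on which it is wrong
yields a branch of the tree, hence a behaviour in `P`, on which the observer errs at infinitely
many times. Since the output alphabet is finite, each error costs at least the least distance
between two distinct letters, so the accumulated error is unbounded. -/

namespace Observer

variable {E F Q : Type*} (S : Observer E F Q)

theorem state_congr {u u' : ℕ → E} {y y' : ℕ → F} :
    ∀ t, (∀ s < t, u s = u' s) → (∀ s < t, y s = y' s) → S.state u y t = S.state u' y' t
  | 0, _, _ => rfl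
  | t + 1, hu, hy => by
    simp only [Observer.state,
      state_congr t (fun s hs => hu s (hs.trans t.lt_succ_self))
        (fun s hs => hy s (hs.trans t.lt_succ_self)),
      hu t t.lt_succ_self, hy t t.lt_succ_self]

theorem est_congr {u u' : ℕ → E} {y y' : ℕ → F} {t : ℕ}
    (hu : ∀ s ≤ t, u s = u' s) (hy : ∀ s < t, y s = y' s) :
    S.est u y t = S.est u' y' t := by
  rw [Observer.est, Observer.est, S.state_congr t (fun s hs => hu s hs.le) hy, hu t le_rfl]

theorem est_ne_of_est_eq {u u' : ℕ → E} {y y' : ℕ → F} {T : ℕ}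
    (hu : ∀ s ≤ T, u s = u' s) (hy : ∀ s < T, y s = y' s) (hT : y T ≠ y' T)
    (h' : S.est u' y' T = y' T) : S.est u y T ≠ y T := by
  rw [S.est_congr hu hy, h']
  exact hT.symm

end Observer

theorem exists_pos_le_norm_sub_of_finset {F : Type*} [NormedAddCommGroup F] (s : Finset F) :
    ∃ δ > 0, ∀ a ∈ s, ∀ b ∈ s, a ≠ b → δ ≤ ‖a - b‖ := by
  classical
  set D := insert 1 (s.offDiag.image fun p => ‖p.1 - p.2‖)
  refine ⟨D.min' (Finset.insert_nonempty _ _), ?_, fun a ha b hb hab => D.min'_le _ ?_⟩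
  · refine (Finset.lt_min'_iff _ _).mpr fun r hr => ?_
    rcases Finset.mem_insert.mp hr with rfl | hr
    · exact one_pos
    · obtain ⟨p, hp, rfl⟩ := Finset.mem_image.mp hr
      exact norm_pos_iff.mpr (sub_ne_zero.mpr (Finset.mem_offDiag.mp hp).2.2)
  · have hpair : (a, b) ∈ s.offDiag := Finset.mem_offDiag.mpr ⟨ha, hb, hab⟩
    exact Finset.mem_insert_of_mem (Finset.mem_image_of_mem (fun p : F × F => ‖p.1 - p.2‖) hpair)

/-- Bounded partial sums force the terms to zero, and in a finite alphabet the distance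
between distinct letters is bounded below. -/
theorem eventually_eq_of_sum_norm_sub_le {F : Type*} [NormedAddCommGroup F] {s : Finset F}
    {y z : ℕ → F} (hy : ∀ t, y t ∈ s) (hz : ∀ t, z t ∈ s) {M : ℝ}
    (hM : ∀ T, ∑ t ∈ Finset.range (T + 1), ‖y t - z t‖ ≤ M) :
    ∀ᶠ t in Filter.atTop, y t = z t := by
  obtain ⟨δ, hδ, hgap⟩ := exists_pos_le_norm_sub_of_finset s
  have hsum : Summable fun t => ‖y t - z t‖ := by
    refine summable_of_sum_range_le (c := M) (fun _ => norm_nonneg _) fun n => ?_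
    rcases n with _ | T
    · simpa using (norm_nonneg _).trans (by simpa using hM 0)
    · exact hM T
  filter_upwards [hsum.tendsto_atTop_zero.eventually (gt_mem_nhds hδ)] with t ht
  by_contra hne
  exact (hgap _ (hy t) _ (hz t) hne).not_gt ht

theorem diag_eq_of_extends {α : Type*} {s : ℕ → ℕ → α} {τ : ℕ → ℕ} (hτ : StrictMono τ)
    (hs : ∀ k t, t ≤ τ k → s (k + 1) t = s k t) {k t : ℕ} (ht : t ≤ τ k) : s t t = s k t := by
  have hstable : ∀ k m t, t ≤ τ k → s (k + m) t = s k t := by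
    intro k m t ht
    induction m with
    | zero => rfl
    | succ m ih => exact (hs (k + m) t (ht.trans (hτ.monotone (k.le_add_right m)))).trans ih
  rcases le_total k t with hkt | htk
  · obtain ⟨m, rfl⟩ := Nat.exists_eq_add_of_le hkt
    exact hstable k m _ ht
  · obtain ⟨m, rfl⟩ := Nat.exists_eq_add_of_le htk
    exact (hstable t m t (hτ.id_le t)).symm

section SegmentTree

variable {E F : Type*} {Tk : ℕ → ℕ → ℕ} {useg : ℕ → ℕ → ℕ → E} {yseg : ℕ → ℕ → ℕ → F}

def SiblingsSplit (Tk : ℕ → ℕ → ℕ) (useg : ℕ → ℕ → ℕ → E) (yseg : ℕ → ℕ → ℕ → F) : Prop :=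
  ∀ k, 1 ≤ k → ∀ j, 1 ≤ j → j ≤ 2 ^ (k - 1) →
    Tk k (2 * j - 1) = Tk k (2 * j) ∧
    (∀ t, t ≤ Tk k (2 * j - 1) → useg k (2 * j - 1) t = useg k (2 * j) t) ∧
    (∀ t, t < Tk k (2 * j - 1) → yseg k (2 * j - 1) t = yseg k (2 * j) t) ∧
    yseg k (2 * j - 1) (Tk k (2 * j - 1)) ≠ yseg k (2 * j) (Tk k (2 * j - 1))

def ChildrenExtend (Tk : ℕ → ℕ → ℕ) (useg : ℕ → ℕ → ℕ → E) (yseg : ℕ → ℕ → ℕ → F) : Prop :=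
  ∀ k, 2 ≤ k → ∀ j, 1 ≤ j → j ≤ 2 ^ (k - 1) →
    Tk (k - 1) j < Tk k (2 * j) ∧
    ∀ t, t ≤ Tk (k - 1) j →
      useg k (2 * j) t = useg (k - 1) j t ∧ yseg k (2 * j) t = yseg (k - 1) j t

/-- `J k` is the node at level `k` of an infinite branch of the binary tree whose nodes at
level `k` are numbered `1, …, 2 ^ k`, the children of `j` being `2 * j - 1` and `2 * j`. -/
def IsBranch (J : ℕ → ℕ) : Prop :=
  J 0 = 1 ∧ ∀ k, J (k + 1) = 2 * J k - 1 ∨ J (k + 1) = 2 * J k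

namespace IsBranch

variable {J : ℕ → ℕ}

theorem one_le_and_le_two_pow (hJ : IsBranch J) (k : ℕ) : 1 ≤ J k ∧ J k ≤ 2 ^ k := by
  induction k with
  | zero => simp [hJ.1]
  | succ k ih => rcases hJ.2 k with h | h <;> rw [h, pow_succ] <;> omega

theorem children_split (hJ : IsBranch J) (hi : SiblingsSplit Tk useg yseg) (k : ℕ) :
    Tk (k + 1) (2 * J k - 1) = Tk (k + 1) (2 * J k) ∧
    (∀ t, t ≤ Tk (k + 1) (2 * J k - 1) → useg (k + 1) (2 * J k - 1) t = useg (k + 1) (2 * J k) t) ∧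
    (∀ t, t < Tk (k + 1) (2 * J k - 1) → yseg (k + 1) (2 * J k - 1) t = yseg (k + 1) (2 * J k) t) ∧
    yseg (k + 1) (2 * J k - 1) (Tk (k + 1) (2 * J k - 1)) ≠
      yseg (k + 1) (2 * J k) (Tk (k + 1) (2 * J k - 1)) :=
  hi (k + 1) (by omega) (J k) (hJ.one_le_and_le_two_pow k).1 (hJ.one_le_and_le_two_pow k).2

theorem child_agrees_with_even_sibling (hJ : IsBranch J) (hi : SiblingsSplit Tk useg yseg) (k : ℕ) :
    Tk (k + 1) (J (k + 1)) = Tk (k + 1) (2 * J k) ∧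
    ∀ t < Tk (k + 1) (2 * J k),
      useg (k + 1) (J (k + 1)) t = useg (k + 1) (2 * J k) t ∧
      yseg (k + 1) (J (k + 1)) t = yseg (k + 1) (2 * J k) t := by
  obtain ⟨hT, hu, hy, -⟩ := hJ.children_split hi k
  rcases hJ.2 k with h | h <;> rw [h]
  · exact ⟨hT, fun t ht => ⟨hu t (hT ▸ ht).le, hy t (hT ▸ ht)⟩⟩
  · exact ⟨rfl, fun _ _ => ⟨rfl, rfl⟩⟩

theorem horizon_lt_and_extends (hJ : IsBranch J) (hi : SiblingsSplit Tk useg yseg)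
    (hii : ChildrenExtend Tk useg yseg) (k : ℕ) :
    Tk (k + 1) (J (k + 1)) < Tk (k + 2) (J (k + 2)) ∧
    ∀ t ≤ Tk (k + 1) (J (k + 1)),
      useg (k + 2) (J (k + 2)) t = useg (k + 1) (J (k + 1)) t ∧
      yseg (k + 2) (J (k + 2)) t = yseg (k + 1) (J (k + 1)) t := by
  obtain ⟨hlt, hext⟩ := hii (k + 2) (by omega) (J (k + 1))
    (hJ.one_le_and_le_two_pow (k + 1)).1 (hJ.one_le_and_le_two_pow (k + 1)).2
  obtain ⟨hT, hagree⟩ := hJ.child_agrees_with_even_sibling hi (k + 1)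
  refine ⟨hT ▸ hlt, fun t ht => ?_⟩
  have hchild := hagree t (ht.trans_lt hlt)
  exact ⟨hchild.1.trans (hext t ht).1, hchild.2.trans (hext t ht).2⟩

theorem strictMono_horizon (hJ : IsBranch J) (hi : SiblingsSplit Tk useg yseg)
    (hii : ChildrenExtend Tk useg yseg) : StrictMono fun k => Tk (k + 1) (J (k + 1)) :=
  strictMono_nat_of_lt_succ fun k => (hJ.horizon_lt_and_extends hi hii k).1

/-- The behaviour along the branch reads time `t` off the segment at level `t + 1`, whose
horizon is at least `t`. -/
theorem limit_agrees (hJ : IsBranch J) (hi : SiblingsSplit Tk useg yseg)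
    (hii : ChildrenExtend Tk useg yseg) {k t : ℕ} (ht : t ≤ Tk (k + 1) (J (k + 1))) :
    useg (t + 1) (J (t + 1)) t = useg (k + 1) (J (k + 1)) t ∧
    yseg (t + 1) (J (t + 1)) t = yseg (k + 1) (J (k + 1)) t :=
  ⟨diag_eq_of_extends (s := fun k => useg (k + 1) (J (k + 1))) (hJ.strictMono_horizon hi hii)
      (fun k t ht => (hJ.horizon_lt_and_extends hi hii k).2 t ht |>.1) ht,
    diag_eq_of_extends (s := fun k => yseg (k + 1) (J (k + 1))) (hJ.strictMono_horizon hi hii)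
      (fun k t ht => (hJ.horizon_lt_and_extends hi hii k).2 t ht |>.2) ht⟩

end IsBranch

end SegmentTree

namespace Observer

variable {E F Q : Type*} (S : Observer E F Q)

/-- Descend into a child on which `S` mispredicts the output at the branching time: if `S` is
right on the even child, it is wrong on the odd one. -/
noncomputable def erringBranch (Tk : ℕ → ℕ → ℕ) (useg : ℕ → ℕ → ℕ → E)
    (yseg : ℕ → ℕ → ℕ → F) : ℕ → ℕ
  | 0 => 1
  | k + 1 =>
    letI j := 2 * erringBranch Tk useg yseg k
    open Classical in
    if S.est (useg (k + 1) j) (yseg (k + 1) j) (Tk (k + 1) j) = yseg (k + 1) j (Tk (k + 1) j)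
    then j - 1 else j

variable {Tk : ℕ → ℕ → ℕ} {useg : ℕ → ℕ → ℕ → E} {yseg : ℕ → ℕ → ℕ → F}

theorem isBranch_erringBranch : IsBranch (S.erringBranch Tk useg yseg) := by
  refine ⟨rfl, fun k => ?_⟩
  rw [erringBranch]
  split_ifs <;> simp

theorem erringBranch_errs (hi : SiblingsSplit Tk useg yseg) (k : ℕ) :
    letI J := S.erringBranch Tk useg yseg
    S.est (useg (k + 1) (J (k + 1))) (yseg (k + 1) (J (k + 1))) (Tk (k + 1) (J (k + 1))) ≠
      yseg (k + 1) (J (k + 1)) (Tk (k + 1) (J (k + 1))) := by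
  obtain ⟨hT, hu, hy, hne⟩ := S.isBranch_erringBranch.children_split hi k
  simp only [erringBranch]
  split_ifs with hright
  · rw [hT] at hu hy hne ⊢
    exact S.est_ne_of_est_eq hu hy hne hright
  · exact hright

end Observer

theorem stmt_14_general {E F : Type*} [NormedAddCommGroup E] [NormedAddCommGroup F]
    (P : Set ((ℕ → E) × (ℕ → F))) (Ys : Finset F)
    (Tk : ℕ → ℕ → ℕ) (useg : ℕ → ℕ → ℕ → E) (yseg : ℕ → ℕ → ℕ → F)
    (hyYs : ∀ k j t, yseg k j t ∈ Ys)
    (hi : ∀ k, 1 ≤ k → ∀ j, 1 ≤ j → j ≤ 2 ^ (k - 1) →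
      Tk k (2 * j - 1) = Tk k (2 * j) ∧
      (∀ t, t ≤ Tk k (2 * j - 1) → useg k (2 * j - 1) t = useg k (2 * j) t) ∧
      (∀ t, t < Tk k (2 * j - 1) → yseg k (2 * j - 1) t = yseg k (2 * j) t) ∧
      yseg k (2 * j - 1) (Tk k (2 * j - 1)) ≠ yseg k (2 * j) (Tk k (2 * j - 1)))
    (hii : ∀ k, 2 ≤ k → ∀ j, 1 ≤ j → j ≤ 2 ^ (k - 1) →
      Tk (k - 1) j < Tk k (2 * j) ∧
      ∀ t, t ≤ Tk (k - 1) j →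
        useg k (2 * j) t = useg (k - 1) j t ∧ yseg k (2 * j) t = yseg (k - 1) j t)
    (hiii : ∀ jfun : ℕ → ℕ,
      (∀ k, 1 ≤ k → 1 ≤ jfun k ∧ jfun k ≤ 2 ^ k) →
      (∀ k, 1 ≤ k → jfun (k + 1) = 2 * jfun k - 1 ∨ jfun (k + 1) = 2 * jfun k) →
      ∀ (u : ℕ → E) (y : ℕ → F),
        (∀ t, t ≤ Tk 1 (jfun 1) → u t = useg 1 (jfun 1) t ∧ y t = yseg 1 (jfun 1) t) →
        (∀ k, 2 ≤ k → ∀ t, Tk (k - 1) (jfun (k - 1)) < t → t ≤ Tk k (jfun k) →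
          u t = useg k (jfun k) t ∧ y t = yseg k (jfun k) t) →
        (u, y) ∈ P) :
    ¬ WeaklyOutputObservable P (Ys : Set F) := by
  rintro ⟨Q, S, hSYs, hgain⟩
  set J := S.erringBranch Tk useg yseg
  have hJ : IsBranch J := S.isBranch_erringBranch
  set u : ℕ → E := fun t => useg (t + 1) (J (t + 1)) t
  set y : ℕ → F := fun t => yseg (t + 1) (J (t + 1)) t
  have hmem : (u, y) ∈ P := by
    refine hiii J (fun k _ => hJ.one_le_and_le_two_pow k) (fun k _ => hJ.2 k) u y
      (fun t ht => hJ.limit_agrees hi hii (k := 0) ht) fun k hk t _ ht => ?_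
    obtain ⟨k, rfl⟩ : ∃ m, k = m + 1 := ⟨k - 1, by omega⟩
    exact hJ.limit_agrees hi hii ht
  obtain ⟨M, hM⟩ := hgain (u, y) hmem
  have hright : ∀ᶠ t in Filter.atTop, y t = S.est u y t :=
    eventually_eq_of_sum_norm_sub_le (fun t => hyYs _ _ t) (fun t => hSYs _ _)
      (by simpa using hM)
  obtain ⟨k, hk⟩ := ((hJ.strictMono_horizon hi hii).tendsto_atTop.eventually hright).exists
  have hagree {t : ℕ} (ht : t ≤ Tk (k + 1) (J (k + 1))) := hJ.limit_agrees hi hii ht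
  apply S.erringBranch_errs hi k
  rw [← S.est_congr (fun s hs => (hagree hs).1) (fun s hs => (hagree hs.le).2), ← (hagree le_rfl).2]
  exact hk.symm

/-- If a system `P` over finite alphabets (`|𝒰| < ∞`, `1 < |𝒴| < ∞`) admits an unobservable
family `Ψ` of input-output segments — a binary tree where (i) sibling segments have equal
horizons, identical inputs, identical outputs except at the final time where they differ;
(ii) each child extends its parent with strictly larger horizon; and (iii) every infinite
branch concatenates to a valid behavior of `P` — then `P` is not weakly output observable. -/
theorem stmt_14 {E F : Type*} [NormedAddCommGroup E] [NormedAddCommGroup F]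
    (P : Set ((ℕ → E) × (ℕ → F))) (Us : Finset E) (Ys : Finset F) (hYs : 1 < Ys.card)
    (hP : ∀ uy ∈ P, (∀ t : ℕ, uy.1 t ∈ Us) ∧ (∀ t : ℕ, uy.2 t ∈ Ys))
    (Tk : ℕ → ℕ → ℕ) (useg : ℕ → ℕ → ℕ → E) (yseg : ℕ → ℕ → ℕ → F)
    (hyYs : ∀ k j t, yseg k j t ∈ Ys)
    (hi : ∀ k, 1 ≤ k → ∀ j, 1 ≤ j → j ≤ 2 ^ (k - 1) →
      Tk k (2 * j - 1) = Tk k (2 * j) ∧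
      (∀ t, t ≤ Tk k (2 * j - 1) → useg k (2 * j - 1) t = useg k (2 * j) t) ∧
      (∀ t, t < Tk k (2 * j - 1) → yseg k (2 * j - 1) t = yseg k (2 * j) t) ∧
      yseg k (2 * j - 1) (Tk k (2 * j - 1)) ≠ yseg k (2 * j) (Tk k (2 * j - 1)))
    (hii : ∀ k, 2 ≤ k → ∀ j, 1 ≤ j → j ≤ 2 ^ (k - 1) →
      Tk (k - 1) j < Tk k (2 * j) ∧
      ∀ t, t ≤ Tk (k - 1) j →
        useg k (2 * j) t = useg (k - 1) j t ∧ yseg k (2 * j) t = yseg (k - 1) j t)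
    (hiii : ∀ jfun : ℕ → ℕ,
      (∀ k, 1 ≤ k → 1 ≤ jfun k ∧ jfun k ≤ 2 ^ k) →
      (∀ k, 1 ≤ k → jfun (k + 1) = 2 * jfun k - 1 ∨ jfun (k + 1) = 2 * jfun k) →
      ∀ (u : ℕ → E) (y : ℕ → F),
        (∀ t, t ≤ Tk 1 (jfun 1) → u t = useg 1 (jfun 1) t ∧ y t = yseg 1 (jfun 1) t) →
        (∀ k, 2 ≤ k → ∀ t, Tk (k - 1) (jfun (k - 1)) < t → t ≤ Tk k (jfun k) →
          u t = useg k (jfun k) t ∧ y t = yseg k (jfun k) t) →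
        (u, y) ∈ P) :
    ¬ WeaklyOutputObservable P (Ys : Set F) :=
  stmt_14_general P Ys Tk useg yseg hyYs hi hii hiii
end
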